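/- Let P be a homogeneous element of degree n ≥ 1 of the free Lie algebra L, with decomposition P = x·P_x + y·P_y in T. Then P = γ(x·P_x) + γ(y·P_y). -/

import Mathlib

noncomputable section

open scoped BigOperators

variable (K : Type) [Field K] [CharZero K]

/-- The free associative algebra `T = K⟨x,y⟩`, realized as the monoid algebra of the
free monoid on two generators. -/
abbrev T := MonoidAlgebra K (FreeMonoid (Fin 2))

/-- The word `v₁⋯vₙ` (a list of letters) as an element of `T`. -/
def word (l : List (Fin 2)) : T K := MonoidAlgebra.single (FreeMonoid.ofList l) 1

/-- The generator `x`. -/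
def X : T K := word K [0]

/-- The generator `y`. -/
def Y : T K := word K [1]

/-- Right-nested bracket `[v₁,[v₂,…,[vₙ₋₁,vₙ]…]]` of a word. -/
def brList : List (Fin 2) → T K
  | [] => 0
  | [v] => word K [v]
  | v :: rest => word K [v] * brList rest - brList rest * word K [v]

/-- The Dynkin map `γ : T → T`, sending a word `v₁⋯vₙ` to
`(1/n)[v₁,[v₂,…,[vₙ₋₁,vₙ]…]]` (and `1 ↦ 0`). -/
def dynkin : T K →ₗ[K] T K :=
  (Finsupp.linearCombination K fun w : FreeMonoid (Fin 2) =>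
    ((w.toList.length : K)⁻¹) • brList K w.toList)
    ∘ₗ (MonoidAlgebra.coeffLinearEquiv K).toLinearMap

attribute [local instance] LieRing.ofAssociativeRing

/-- The free Lie algebra `L` on `x, y`, as the Lie subalgebra of `T` generated by `x` and `y`. -/
def L : LieSubalgebra K (T K) := LieSubalgebra.lieSpan K (T K) {X K, Y K}

/-- The degree-`n` homogeneous component `T_n` of `T`, spanned by the words of length `n`. -/
def homog (n : ℕ) : Submodule K (T K) :=
  Submodule.span K { t | ∃ l : List (Fin 2), l.length = n ∧ t = word K l }

/-- The value `σ(i)` of a permutation of `{0,…,n-1}` on a natural number (junk value `0`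
outside the range). -/
def permVal {n : ℕ} (σ : Equiv.Perm (Fin n)) (i : ℕ) : ℕ :=
  if h : i < n then (σ ⟨i, h⟩ : ℕ) else 0

/-- The (0-indexed) descent set of a permutation: positions `i ∈ {0,…,n-2}` with
`σ(i) > σ(i+1)`. -/
def descSet {n : ℕ} (σ : Equiv.Perm (Fin n)) : Finset ℕ :=
  (Finset.range (n - 1)).filter fun i => permVal σ (i + 1) < permVal σ i

/-- The number of descents of a permutation. -/
def descNum {n : ℕ} (σ : Equiv.Perm (Fin n)) : ℕ := (descSet σ).card

/-- `DSet n k` is the set of permutations of `{0,…,n-1}` whose descent set is exactly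
the first `k` positions (this is `D_{1..k}` of the paper, in 0-indexed form). -/
def DSet (n k : ℕ) : Finset (Equiv.Perm (Fin n)) :=
  Finset.univ.filter fun σ => descSet σ = Finset.range k

/-- The Eulerian coefficient `c_σ = (-1)^{d(σ)} (binom (n-1) (d σ))⁻¹`. -/
def eulCoeff {n : ℕ} (σ : Equiv.Perm (Fin n)) : K :=
  (-1 : K) ^ descNum σ * ((Nat.choose (n - 1) (descNum σ) : K))⁻¹

/-- The degree-`n` Eulerian idempotent applied to the word `w₁⋯wₙ` given by
`v : Fin n → Fin 2`: `eₙ(w) = Σ_σ c_σ w^σ`. -/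
def eul (n : ℕ) (v : Fin n → Fin 2) : T K :=
  ∑ σ : Equiv.Perm (Fin n), eulCoeff K σ • word K (List.ofFn fun i => v (σ i))

/-- The `a`-part of an element of `T`: the linear map sending a word `a·w ↦ w` and
any word not starting with the letter `a` (or the empty word) to `0`.  For `p` with zero
constant term, `p = x·(letterPart 0 p) + y·(letterPart 1 p)`. -/
def letterPart (a : Fin 2) : T K →ₗ[K] T K :=
  (Finsupp.linearCombination K fun w : FreeMonoid (Fin 2) =>
    match w.toList with
    | [] => 0
    | b :: rest => if b = a then word K rest else 0)
    ∘ₗ (MonoidAlgebra.coeffLinearEquiv K).toLinearMap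

/-- The algebra endomorphism `s : T → T` with `s(x) = -y`, `s(y) = -x`. -/
def sMap : T K →ₐ[K] T K :=
  MonoidAlgebra.lift K (T K) (FreeMonoid (Fin 2))
    (FreeMonoid.lift fun a : Fin 2 => if a = 0 then -(Y K) else -(X K))

/-! Dynkin–Specht–Wever. Write `β` (`bracketing`) for the linear extension of
`v₁⋯vₙ ↦ [v₁,[v₂,…,vₙ]…]` and `N` (`eulerDeriv`) for `w ↦ |w| w`, so that `γ = N⁻¹ ∘ β` on `T_n`,
`n ≥ 1`. The elements `u` without constant term with `β u = N u` and `β (u t) = [u, β t]` for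
all `t` without constant term form a Lie subalgebra, because `N` is a derivation; it contains
the letters, hence `L`. So `γ P = P`, and `x·P_x + y·P_y = P` as `P` has no constant term. -/

section

omit [CharZero K]

lemma word_append (l₁ l₂ : List (Fin 2)) : word K (l₁ ++ l₂) = word K l₁ * word K l₂ := by
  simp [word, MonoidAlgebra.single_mul_single]

lemma single_eq_smul_word (w : FreeMonoid (Fin 2)) (b : K) :
    (MonoidAlgebra.single w b : T K) = b • word K w.toList := by
  simp [word, FreeMonoid.ofList_toList]

lemma linearCombination_comp_coeff_word (f : FreeMonoid (Fin 2) → T K) (l : List (Fin 2)) :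
    (Finsupp.linearCombination K f ∘ₗ (MonoidAlgebra.coeffLinearEquiv K).toLinearMap)
      (word K l) = f (FreeMonoid.ofList l) := by
  rw [LinearMap.comp_apply, LinearEquiv.coe_coe, MonoidAlgebra.coeffLinearEquiv_apply, word,
    MonoidAlgebra.coeff_single, Finsupp.linearCombination_single, one_smul]

lemma brList_cons {l : List (Fin 2)} (hl : l ≠ []) (a : Fin 2) :
    brList K (a :: l) = ⁅word K [a], brList K l⁆ := by
  obtain ⟨b, r, rfl⟩ := List.exists_cons_of_ne_nil hl
  rfl

def bracketing : T K →ₗ[K] T K :=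
  (Finsupp.linearCombination K fun w : FreeMonoid (Fin 2) => brList K w.toList)
    ∘ₗ (MonoidAlgebra.coeffLinearEquiv K).toLinearMap

def eulerDeriv : T K →ₗ[K] T K :=
  (Finsupp.linearCombination K fun w : FreeMonoid (Fin 2) =>
    (w.toList.length : K) • word K w.toList)
    ∘ₗ (MonoidAlgebra.coeffLinearEquiv K).toLinearMap

def augmentation : Submodule K (T K) :=
  Submodule.span K { t | ∃ l : List (Fin 2), l ≠ [] ∧ t = word K l }

lemma bracketing_word (l : List (Fin 2)) : bracketing K (word K l) = brList K l :=
  linearCombination_comp_coeff_word K _ l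

lemma eulerDeriv_word (l : List (Fin 2)) : eulerDeriv K (word K l) = (l.length : K) • word K l :=
  linearCombination_comp_coeff_word K _ l

lemma dynkin_word (l : List (Fin 2)) :
    dynkin K (word K l) = ((l.length : K)⁻¹) • brList K l :=
  linearCombination_comp_coeff_word K _ l

lemma letterPart_cons (b a : Fin 2) (r : List (Fin 2)) :
    letterPart K b (word K (a :: r)) = if a = b then word K r else 0 :=
  linearCombination_comp_coeff_word K _ (a :: r)

lemma eulerDeriv_single (w : FreeMonoid (Fin 2)) (b : K) :
    eulerDeriv K (MonoidAlgebra.single w b) = (w.toList.length : K) • MonoidAlgebra.single w b := by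
  rw [single_eq_smul_word, map_smul, eulerDeriv_word, smul_comm]

lemma eulerDeriv_mul (u v : T K) :
    eulerDeriv K (u * v) = eulerDeriv K u * v + u * eulerDeriv K v := by
  induction u using MonoidAlgebra.induction_linear with
  | zero => simp
  | add u₁ u₂ h₁ h₂ => simp only [add_mul, map_add, h₁, h₂]; abel
  | single w b =>
    induction v using MonoidAlgebra.induction_linear with
    | zero => simp
    | add v₁ v₂ h₁ h₂ => simp only [mul_add, map_add, h₁, h₂]; abel
    | single w' b' =>
      simp only [MonoidAlgebra.single_mul_single, eulerDeriv_single, smul_mul_assoc,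
        mul_smul_comm, ← add_smul, FreeMonoid.toList_mul, List.length_append, Nat.cast_add]

lemma word_mul_mem_augmentation (m : List (Fin 2)) {t : T K} (ht : t ∈ augmentation K) :
    word K m * t ∈ augmentation K := by
  induction ht using Submodule.span_induction with
  | mem _ h =>
    obtain ⟨l, hl, rfl⟩ := h
    exact Submodule.subset_span ⟨m ++ l, by simp [hl], (word_append K m l).symm⟩
  | zero => simp
  | add _ _ _ _ h₁ h₂ => rw [mul_add]; exact add_mem h₁ h₂
  | smul c _ _ h => rw [mul_smul_comm]; exact Submodule.smul_mem _ c h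

lemma mul_mem_augmentation (u : T K) {t : T K} (ht : t ∈ augmentation K) :
    u * t ∈ augmentation K := by
  induction u using MonoidAlgebra.induction_linear with
  | zero => simp
  | add u₁ u₂ h₁ h₂ => rw [add_mul]; exact add_mem h₁ h₂
  | single w b =>
    rw [single_eq_smul_word, smul_mul_assoc]
    exact Submodule.smul_mem _ b (word_mul_mem_augmentation K _ ht)

lemma bracketing_letter_mul (a : Fin 2) {t : T K} (ht : t ∈ augmentation K) :
    bracketing K (word K [a] * t) = ⁅word K [a], bracketing K t⁆ := by
  induction ht using Submodule.span_induction with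
  | mem _ h =>
    obtain ⟨l, hl, rfl⟩ := h
    rw [← word_append, List.singleton_append, bracketing_word, bracketing_word, brList_cons K hl]
  | zero => simp
  | add _ _ _ _ h₁ h₂ => rw [mul_add, map_add, h₁, h₂, map_add, lie_add]
  | smul c _ _ h => rw [mul_smul_comm, map_smul, h, map_smul, lie_smul]

def dynkinAdmissible : LieSubalgebra K (T K) where
  carrier := {u | u ∈ augmentation K ∧ bracketing K u = eulerDeriv K u ∧
    ∀ t ∈ augmentation K, bracketing K (u * t) = ⁅u, bracketing K t⁆}
  zero_mem' := ⟨zero_mem _, by simp, fun t _ => by simp⟩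
  add_mem' := by
    rintro u v ⟨hu, hβu, hmu⟩ ⟨hv, hβv, hmv⟩
    refine ⟨add_mem hu hv, by rw [map_add, map_add, hβu, hβv], fun t ht => ?_⟩
    rw [add_mul, map_add, hmu t ht, hmv t ht, add_lie]
  smul_mem' := by
    rintro c u ⟨hu, hβu, hmu⟩
    refine ⟨Submodule.smul_mem _ c hu, by rw [map_smul, map_smul, hβu], fun t ht => ?_⟩
    rw [smul_mul_assoc, map_smul, hmu t ht, smul_lie]
  lie_mem' := by
    rintro u v ⟨hu, hβu, hmu⟩ ⟨hv, hβv, hmv⟩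
    refine ⟨?_, ?_, fun t ht => ?_⟩
    · rw [Ring.lie_def]
      exact sub_mem (mul_mem_augmentation K u hv) (mul_mem_augmentation K v hu)
    · rw [Ring.lie_def, map_sub, map_sub, hmu v hv, hmv u hu, hβu, hβv, eulerDeriv_mul,
        eulerDeriv_mul, Ring.lie_def, Ring.lie_def]
      abel
    · rw [Ring.lie_def, sub_mul, map_sub, mul_assoc, mul_assoc,
        hmu _ (mul_mem_augmentation K v ht), hmv _ (mul_mem_augmentation K u ht), hmv t ht,
        hmu t ht, ← Ring.lie_def, lie_lie]

lemma word_singleton_mem_dynkinAdmissible (a : Fin 2) : word K [a] ∈ dynkinAdmissible K :=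
  ⟨Submodule.subset_span ⟨[a], List.cons_ne_nil a [], rfl⟩,
    by rw [bracketing_word, eulerDeriv_word, List.length_singleton, Nat.cast_one, one_smul]; rfl,
    fun _ ht => bracketing_letter_mul K a ht⟩

lemma L_le_dynkinAdmissible : L K ≤ dynkinAdmissible K := by
  rw [L, LieSubalgebra.lieSpan_le]
  rintro u (rfl | rfl) <;> exact word_singleton_mem_dynkinAdmissible K _

lemma eulerDeriv_of_mem_homog {n : ℕ} {P : T K} (hP : P ∈ homog K n) :
    eulerDeriv K P = (n : K) • P := by
  refine LinearMap.eqOn_span (f := eulerDeriv K) (g := (n : K) • LinearMap.id) ?_ hP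
  rintro _ ⟨l, rfl, rfl⟩
  exact eulerDeriv_word K l

lemma dynkin_of_mem_homog {n : ℕ} {P : T K} (hP : P ∈ homog K n) :
    dynkin K P = ((n : K)⁻¹) • bracketing K P := by
  refine LinearMap.eqOn_span (f := dynkin K) (g := (n : K)⁻¹ • bracketing K) ?_ hP
  rintro _ ⟨l, rfl, rfl⟩
  rw [dynkin_word, LinearMap.smul_apply, bracketing_word]

lemma X_mul_letterPart_add_Y_mul_letterPart {P : T K} (hP : P ∈ augmentation K) :
    X K * letterPart K 0 P + Y K * letterPart K 1 P = P := by
  refine LinearMap.eqOn_span (g := LinearMap.id)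
    (f := LinearMap.mulLeft K (X K) ∘ₗ letterPart K 0 + LinearMap.mulLeft K (Y K) ∘ₗ letterPart K 1)
    ?_ hP
  rintro _ ⟨_ | ⟨a, r⟩, hl, rfl⟩
  · exact absurd rfl hl
  · fin_cases a <;> simp [letterPart_cons, X, Y, ← word_append]

end

theorem dynkin_eq_self_of_mem_L {n : ℕ} (hn : 1 ≤ n) {P : T K} (hPL : P ∈ L K)
    (hPn : P ∈ homog K n) : dynkin K P = P := by
  obtain ⟨-, hβP, -⟩ := L_le_dynkinAdmissible K hPL
  rw [dynkin_of_mem_homog K hPn, hβP, eulerDeriv_of_mem_homog K hPn, smul_smul,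
    inv_mul_cancel₀ (Nat.cast_ne_zero.mpr (by omega)), one_smul]

/-- A homogeneous element `P` of degree `n ≥ 1` of the free Lie algebra `L`, with
decomposition `P = x·P_x + y·P_y`, satisfies `P = γ(x·P_x) + γ(y·P_y)`. -/
theorem stmt12 (n : ℕ) (hn : 1 ≤ n) (P : T K) (hPL : P ∈ L K) (hPn : P ∈ homog K n) :
    P = dynkin K (X K * letterPart K 0 P) + dynkin K (Y K * letterPart K 1 P) := by
  obtain ⟨hPaug, -, -⟩ := L_le_dynkinAdmissible K hPL
  rw [← map_add, X_mul_letterPart_add_Y_mul_letterPart K hPaug,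
    dynkin_eq_self_of_mem_L K hn hPL hPn]

end
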